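/- arXiv:1203.2140 — 2 statements merged into one kernel-verified Lean document; each statement's English description precedes it below -/
import Mathlib

section
/- Let g be a nondegenerate symmetric bilinear form on a 4-dimensional real vector space V. Then the map h ↦ h∘g (Kulkarni–Nomizu product with g) is injective on symmetric bilinear forms: if h₁ and h₂ are symmetric bilinear forms on V with h₁∘g = h₂∘g, then h₁ = h₂. -/
/-!
The product is linear in `h`, so it suffices to show that `k ∘ g = 0` forces `k = 0`. Take a
basis `b` and its `g`-dual basis `e`, and contract `k ∘ g = 0` over `(y, w) = (e i, b i)`: this
gives `(n - 2) k + (tr_g k) g = 0` with `n = dim V`. Contracting once more gives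
`(2n - 2) tr_g k = 0`. For `n > 2` both coefficients are nonzero, so `tr_g k = 0` and then
`k = 0`.
-/

def kulkarniNomizu {V : Type*} [AddCommGroup V] [Module ℝ V]
    (h k : V →ₗ[ℝ] V →ₗ[ℝ] ℝ) (x y z w : V) : ℝ :=
  h x z * k y w - h x w * k y z + h y w * k x z - h y z * k x w

theorem kulkarniNomizu_sub_left {V : Type*} [AddCommGroup V] [Module ℝ V]
    (h₁ h₂ k : V →ₗ[ℝ] V →ₗ[ℝ] ℝ) (x y z w : V) :
    kulkarniNomizu (h₁ - h₂) k x y z w =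
      kulkarniNomizu h₁ k x y z w - kulkarniNomizu h₂ k x y z w := by
  simp only [kulkarniNomizu, LinearMap.sub_apply]
  ring

open LinearMap.BilinForm

section DualBasis

variable {V ι : Type*} [AddCommGroup V] [Module ℝ V] [Fintype ι] [DecidableEq ι]
  {g : V →ₗ[ℝ] V →ₗ[ℝ] ℝ} (hg : Nondegenerate g) (b : Module.Basis ι ℝ V)

theorem apply_dualBasis_left_eq_coord (i : ι) : g (dualBasis g hg b i) = b.coord i :=
  b.ext fun j => by simp [apply_dualBasis_left, Finsupp.single_apply]

theorem sum_apply_basis_mul_apply_dualBasis (k : V →ₗ[ℝ] V →ₗ[ℝ] ℝ) (x z : V) :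
    ∑ i, k x (b i) * g (dualBasis g hg b i) z = k x z := by
  calc ∑ i, k x (b i) * g (dualBasis g hg b i) z = ∑ i, k x (b.repr z i • b i) := by
        simp [apply_dualBasis_left_eq_coord, mul_comm]
    _ = k x z := by rw [← map_sum, b.sum_repr]

theorem sum_apply_dualBasis_mul_apply_basis (k : V →ₗ[ℝ] V →ₗ[ℝ] ℝ) (x z : V) :
    ∑ i, k (dualBasis g hg b i) z * g x (b i) = k x z := by
  calc ∑ i, k (dualBasis g hg b i) z * g x (b i)
      = k (∑ i, (dualBasis g hg b).repr x i • dualBasis g hg b i) z := by simp [mul_comm]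
    _ = k x z := by rw [(dualBasis g hg b).sum_repr]

theorem sum_apply_dualBasis_basis : ∑ i, g (dualBasis g hg b i) (b i) = Fintype.card ι := by
  simp [apply_dualBasis_left]

theorem sum_kulkarniNomizu_dualBasis (k : V →ₗ[ℝ] V →ₗ[ℝ] ℝ) (x z : V) :
    ∑ i, kulkarniNomizu k g x (dualBasis g hg b i) z (b i) =
      (Fintype.card ι - 2) * k x z + g x z * ∑ i, k (dualBasis g hg b i) (b i) := by
  simp only [kulkarniNomizu, Finset.sum_sub_distrib, Finset.sum_add_distrib, ← Finset.mul_sum,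
    ← Finset.sum_mul, sum_apply_dualBasis_basis, sum_apply_basis_mul_apply_dualBasis,
    sum_apply_dualBasis_mul_apply_basis]
  ring

end DualBasis

theorem eq_zero_of_kulkarniNomizu_eq_zero {V : Type*} [AddCommGroup V] [Module ℝ V]
    [FiniteDimensional ℝ V] (hn : 2 < Module.finrank ℝ V) {g k : V →ₗ[ℝ] V →ₗ[ℝ] ℝ}
    (hg : Nondegenerate g) (hk : ∀ x y z w, kulkarniNomizu k g x y z w = 0) :
    k = 0 := by
  set n := Module.finrank ℝ V
  let b := Module.finBasis ℝ V
  set T := ∑ i, k (dualBasis g hg b i) (b i)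
  have hcontract : ∀ x z, (n - 2 : ℝ) * k x z + g x z * T = 0 := fun x z => by
    simpa [hk] using (sum_kulkarniNomizu_dualBasis hg b k x z).symm
  have hT : (2 * n - 2 : ℝ) * T = 0 := by
    have := Finset.sum_eq_zero (s := .univ) fun i _ => hcontract (dualBasis g hg b i) (b i)
    rw [Finset.sum_add_distrib, ← Finset.mul_sum, ← Finset.sum_mul,
      sum_apply_dualBasis_basis hg b, Fintype.card_fin] at this
    linarith
  have hn' : (2 : ℝ) < n := by exact_mod_cast hn
  have hT0 : T = 0 := (mul_eq_zero.mp hT).resolve_left (by linarith)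
  ext x z
  simpa [hT0, sub_eq_zero, hn'.ne'] using hcontract x z

theorem kulkarniNomizu_with_metric_injective_general {V : Type*} [AddCommGroup V] [Module ℝ V]
    [FiniteDimensional ℝ V] (hdim : Module.finrank ℝ V = 4)
    (g h₁ h₂ : V →ₗ[ℝ] V →ₗ[ℝ] ℝ)
    (hgnd : ∀ x : V, (∀ y : V, g x y = 0) → x = 0)
    (heq : ∀ x y z w : V, kulkarniNomizu h₁ g x y z w = kulkarniNomizu h₂ g x y z w) :
    h₁ = h₂ :=
  sub_eq_zero.mp <| eq_zero_of_kulkarniNomizu_eq_zero (by omega)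
    (.ofSeparatingLeft hgnd) fun x y z w => by rw [kulkarniNomizu_sub_left, heq, sub_self]

/-- For a nondegenerate symmetric bilinear form `g` on a 4-dimensional real
vector space, the map `h ↦ h∘g` is injective on symmetric bilinear forms. -/
theorem kulkarniNomizu_with_metric_injective {V : Type*} [AddCommGroup V] [Module ℝ V]
    [FiniteDimensional ℝ V] (hdim : Module.finrank ℝ V = 4)
    (g h₁ h₂ : V →ₗ[ℝ] V →ₗ[ℝ] ℝ)
    (hgsymm : ∀ x y, g x y = g y x)
    (hgnd : ∀ x : V, (∀ y : V, g x y = 0) → x = 0)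
    (h₁symm : ∀ x y, h₁ x y = h₁ y x) (h₂symm : ∀ x y, h₂ x y = h₂ y x)
    (heq : ∀ x y z w : V, kulkarniNomizu h₁ g x y z w = kulkarniNomizu h₂ g x y z w) :
    h₁ = h₂ :=
  kulkarniNomizu_with_metric_injective_general hdim g h₁ h₂ hgnd heq
end

section
/- Let m, τ, ξ be real numbers with τ ≠ 0 and τ² ≠ 2m. Then for all vectors u = (u₁,u₂) and v = (v₁,v₂) in ℝ², writing a = (4ξτ³u₁ + τ⁴u₂, 2τu₁) and b = (4ξτ³v₁ + τ⁴v₂, 2τv₁) for the images of u and v under the differential of the map (τ,ξ) ↦ (t,r) = (ξτ⁴, τ²), one has −(1 − 2m/τ²)·a₁b₁ + (1 − 2m/τ²)⁻¹·a₂b₂ = −(4τ⁴/(2m − τ²))·u₁v₁ + (2m − τ²)τ⁴·(4ξu₁ + τu₂)(4ξv₁ + τv₂). That is, the pullback of the (t,r)-block of the Schwarzschild metric −(1−2m/r)dt² + (1−2m/r)⁻¹dr² under the substitution r = τ², t = ξτ⁴ equals −(4τ⁴/(2m−τ²))dτ² + (2m−τ²)τ⁴(4ξdτ + τdξ)². 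-/
/-!
Write `f(r) = 1 - 2m/r = (r - 2m)/r`. Since `dt = τ³(4ξ dτ + τ dξ)` and `dr = 2τ dτ`, the `dt²`-term
picks up `-f(τ²)·τ⁶ = (2m - τ²)τ⁴`, and the `dr²`-term picks up `f(τ²)⁻¹·4τ² = -4τ⁴/(2m - τ²)`.
-/

lemma one_sub_div_eq_div {r : ℝ} (m : ℝ) (hr : r ≠ 0) : 1 - 2 * m / r = (r - 2 * m) / r := by
  field_simp

section Pullback

variable {τ : ℝ} (m ξ : ℝ)

lemma schwarzschild_dt_term (hτ : τ ≠ 0) (u₁ u₂ v₁ v₂ : ℝ) :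
    -(1 - 2 * m / τ ^ 2) * (4 * ξ * τ ^ 3 * u₁ + τ ^ 4 * u₂) * (4 * ξ * τ ^ 3 * v₁ + τ ^ 4 * v₂)
      = (2 * m - τ ^ 2) * τ ^ 4 * (4 * ξ * u₁ + τ * u₂) * (4 * ξ * v₁ + τ * v₂) := by
  rw [one_sub_div_eq_div m (pow_ne_zero 2 hτ)]
  field_simp
  ring

lemma schwarzschild_dr_term (hτ : τ ≠ 0) (u₁ v₁ : ℝ) :
    (1 - 2 * m / τ ^ 2)⁻¹ * (2 * τ * u₁) * (2 * τ * v₁)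
      = -(4 * τ ^ 4 / (2 * m - τ ^ 2)) * u₁ * v₁ := by
  rw [one_sub_div_eq_div m (pow_ne_zero 2 hτ), inv_div, ← neg_sub, div_neg]
  ring

end Pullback

theorem schwarzschild_metric_pullback_general (m τ ξ : ℝ) (hτ : τ ≠ 0) :
    ∀ u₁ u₂ v₁ v₂ : ℝ,
      -(1 - 2 * m / τ ^ 2) * (4 * ξ * τ ^ 3 * u₁ + τ ^ 4 * u₂)
            * (4 * ξ * τ ^ 3 * v₁ + τ ^ 4 * v₂)
        + (1 - 2 * m / τ ^ 2)⁻¹ * (2 * τ * u₁) * (2 * τ * v₁)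
      = -(4 * τ ^ 4 / (2 * m - τ ^ 2)) * u₁ * v₁
        + (2 * m - τ ^ 2) * τ ^ 4 * (4 * ξ * u₁ + τ * u₂) * (4 * ξ * v₁ + τ * v₂) := by
  intro u₁ u₂ v₁ v₂
  rw [schwarzschild_dt_term m ξ hτ, schwarzschild_dr_term m hτ, add_comm]

/-- Pullback of the `(t,r)`-block of the Schwarzschild metric
`−(1−2m/r)dt² + (1−2m/r)⁻¹dr²` under the substitution `r = τ²`, `t = ξτ⁴`:
with `a = (4ξτ³u₁ + τ⁴u₂, 2τu₁)` and `b = (4ξτ³v₁ + τ⁴v₂, 2τv₁)` the images of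
`u`, `v` under the differential, one gets
`−(4τ⁴/(2m−τ²))u₁v₁ + (2m−τ²)τ⁴(4ξu₁ + τu₂)(4ξv₁ + τv₂)`. -/
theorem schwarzschild_metric_pullback (m τ ξ : ℝ) (hτ : τ ≠ 0) (hm : τ ^ 2 ≠ 2 * m) :
    ∀ u₁ u₂ v₁ v₂ : ℝ,
      -(1 - 2 * m / τ ^ 2) * (4 * ξ * τ ^ 3 * u₁ + τ ^ 4 * u₂)
            * (4 * ξ * τ ^ 3 * v₁ + τ ^ 4 * v₂)
        + (1 - 2 * m / τ ^ 2)⁻¹ * (2 * τ * u₁) * (2 * τ * v₁)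
      = -(4 * τ ^ 4 / (2 * m - τ ^ 2)) * u₁ * v₁
        + (2 * m - τ ^ 2) * τ ^ 4 * (4 * ξ * u₁ + τ * u₂) * (4 * ξ * v₁ + τ * v₂) :=
  schwarzschild_metric_pullback_general m τ ξ hτ
end
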